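/- Let E ⊆ ℂ be the open unit disc, let (q_k)_{k≥1} be an enumeration of (ℚ+iℚ)∩E, and put S := ⋃_{k=1}^∞ {q_k} × closedDisc(1−1/k, 1/k²) ⊆ E×E, where closedDisc(c,r) is the closed disc in ℂ with center c and radius r. Then: (i) S is relatively closed in E×E; (ii) int S = ∅; (iii) for every domain U ⊆ E×E the set U∖S is connected; and (iv) the set A := {a ∈ E : the fiber S_{(a,·)} has empty interior in ℂ} equals E∖(ℚ+iℚ), which has empty interior in ℂ. In particular, there exist a domain U ⊆ E×E such that (A×B)∩U∖S contains no open polydisc, where B := {b ∈ E : S_{(·,b)} has empty interior} = E. -/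

import Mathlib

open Filter Topology Set

noncomputable section

namespace JP

/-- A function `u : ℂ → EReal` is *subharmonic* on an open set `Ω ⊆ ℂ`:
it is upper semicontinuous on `Ω` and satisfies the maximum principle against real
parts of complex polynomials on all closed discs contained in `Ω`. -/
def SubharmonicOn (u : ℂ → EReal) (Ω : Set ℂ) : Prop :=
  UpperSemicontinuousOn u Ω ∧
  ∀ c : ℂ, ∀ r : ℝ, 0 < r → Metric.closedBall c r ⊆ Ω →
    ∀ p : Polynomial ℂ,
      (∀ z ∈ Metric.sphere c r, u z ≤ (((p.eval z).re : ℝ) : EReal)) →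
      ∀ z ∈ Metric.closedBall c r, u z ≤ (((p.eval z).re : ℝ) : EReal)

variable {E : Type*}

/-- Plurisubharmonic on `Ω ⊆ E`: upper semicontinuous on `Ω` and subharmonic along
every complex line. -/
def PSHOn [AddCommGroup E] [Module ℂ E] [TopologicalSpace E]
    (u : E → EReal) (Ω : Set E) : Prop :=
  UpperSemicontinuousOn u Ω ∧
  ∀ a b : E, SubharmonicOn (fun t : ℂ => u (a + t • b)) {t : ℂ | a + t • b ∈ Ω}

/-- `P` is pluripolar: locally contained in the `-∞` set of a plurisubharmonic
function which is not identically `-∞`. -/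
def Pluripolar [AddCommGroup E] [Module ℂ E] [TopologicalSpace E] (P : Set E) : Prop :=
  ∀ a ∈ P, ∃ Ω : Set E, IsOpen Ω ∧ a ∈ Ω ∧
    ∃ u : E → EReal, PSHOn u Ω ∧ (∃ z ∈ Ω, u z ≠ ⊥) ∧ ∀ z ∈ P ∩ Ω, u z = ⊥

/-- `P ⊆ ℂ` is polar: locally contained in the `-∞` set of a subharmonic
function which is not identically `-∞`. -/
def PolarIn (P : Set ℂ) : Prop :=
  ∀ a ∈ P, ∃ Ω : Set ℂ, IsOpen Ω ∧ a ∈ Ω ∧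
    ∃ u : ℂ → EReal, SubharmonicOn u Ω ∧ (∃ z ∈ Ω, u z ≠ ⊥) ∧ ∀ z ∈ P ∩ Ω, u z = ⊥

/-- `A` is thin at `a` (one complex variable). -/
def ThinAt (A : Set ℂ) (a : ℂ) : Prop :=
  a ∉ closure A ∨ ∃ U : Set ℂ, IsOpen U ∧ a ∈ U ∧ ∃ u : ℂ → EReal,
    SubharmonicOn u U ∧ Filter.limsup u (nhdsWithin a (A \ {a})) < u a

/-- `A` is plurithin at `a`. -/
def PlurithinAt [AddCommGroup E] [Module ℂ E] [TopologicalSpace E]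
    (A : Set E) (a : E) : Prop :=
  a ∉ closure A ∨ ∃ U : Set E, IsOpen U ∧ a ∈ U ∧ ∃ u : E → EReal,
    PSHOn u U ∧ Filter.limsup u (nhdsWithin a (A \ {a})) < u a

/-- The relative extremal function `h_{A,Ω}`. -/
def relExtremal [AddCommGroup E] [Module ℂ E] [TopologicalSpace E]
    (A Ω : Set E) : E → EReal :=
  fun z => sSup {v : EReal | ∃ u : E → EReal, PSHOn u Ω ∧ (∀ w ∈ Ω, u w ≤ 1) ∧
    (∀ w ∈ A, u w ≤ 0) ∧ v = u z}

/-- The one-variable relative extremal function `h_{A,Ω}` (subharmonic competitors). -/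
def relExtremalC (A Ω : Set ℂ) : ℂ → EReal :=
  fun z => sSup {v : EReal | ∃ u : ℂ → EReal, SubharmonicOn u Ω ∧ (∀ w ∈ Ω, u w ≤ 1) ∧
    (∀ w ∈ A, u w ≤ 0) ∧ v = u z}

/-- Upper semicontinuous regularization within `Ω`. -/
def uscRegIn [TopologicalSpace E] (Ω : Set E) (u : E → EReal) : E → EReal :=
  fun z => Filter.limsup u (nhdsWithin z Ω)

/-- `h*_{A,Ω}`. -/
def hStar [AddCommGroup E] [Module ℂ E] [TopologicalSpace E] (A Ω : Set E) : E → EReal :=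
  uscRegIn Ω (relExtremal A Ω)

/-- `h*_{A,Ω}`, one variable. -/
def hStarC (A Ω : Set ℂ) : ℂ → EReal :=
  uscRegIn Ω (relExtremalC A Ω)

/-- `A` is locally pluriregular at `a`. -/
def LocallyPluriregularAt [AddCommGroup E] [Module ℂ E] [TopologicalSpace E]
    (A : Set E) (a : E) : Prop :=
  ∀ Ω : Set E, IsOpen Ω → a ∈ Ω → hStar (A ∩ Ω) Ω a = 0

/-- `A` is locally pluriregular. -/
def LocallyPluriregular [AddCommGroup E] [Module ℂ E] [TopologicalSpace E]
    (A : Set E) : Prop :=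
  A.Nonempty ∧ ∀ a ∈ A, LocallyPluriregularAt A a

/-- A canonical exhaustion of an open set `Ω` by relatively compact open subsets. -/
def exhaust [NormedAddCommGroup E] (Ω : Set E) (k : ℕ) : Set E :=
  {z ∈ Ω | ‖z‖ < (k : ℝ) + 1 ∧ (Ωᶜ = (∅ : Set E) ∨ ((k : ℝ) + 1)⁻¹ < Metric.infDist z Ωᶜ)}

open scoped Classical in
/-- `ω_{A,Ω} = lim_k h*_{A∩Ω_k,Ω_k}` (a decreasing limit, realized as an infimum). -/
def omegaFn [NormedAddCommGroup E] [NormedSpace ℂ E] (A Ω : Set E) : E → EReal :=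
  fun z => ⨅ k : ℕ,
    if z ∈ exhaust Ω k then hStar (A ∩ exhaust Ω k) (exhaust Ω k) z else (⊤ : EReal)

/-- Hartogs pseudoconvexity: `Ω` is open and `-log dist(·, ∁Ω)` is plurisubharmonic
on `Ω`. -/
def IsPseudoconvex [NormedAddCommGroup E] [NormedSpace ℂ E] (Ω : Set E) : Prop :=
  IsOpen Ω ∧ (Ω = Set.univ ∨
    PSHOn (fun z => ((- Real.log (Metric.infDist z Ωᶜ) : ℝ) : EReal)) Ω)

/-- `M` is relatively closed in `X`. -/
def RelClosedIn [TopologicalSpace E] (M X : Set E) : Prop :=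
  M ⊆ X ∧ closure M ∩ X ⊆ M

/-- `f` is meromorphic on the open set `Ω` with polar set `P`: `P` is relatively
closed in `Ω`, `f` is holomorphic on `Ω \ P`, and locally `f = g/h` with `g, h`
holomorphic, `h ≢ 0`, and `P` contained in the zero set of `h`. -/
def MeromorphicWithPolarOn [NormedAddCommGroup E] [NormedSpace ℂ E]
    (f : E → ℂ) (P Ω : Set E) : Prop :=
  IsOpen Ω ∧ P ⊆ Ω ∧ closure P ∩ Ω ⊆ P ∧
  DifferentiableOn ℂ f (Ω \ P) ∧
  ∀ a ∈ Ω, ∃ U : Set E, IsOpen U ∧ IsPreconnected U ∧ a ∈ U ∧ U ⊆ Ω ∧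
    ∃ g h : E → ℂ, DifferentiableOn ℂ g U ∧ DifferentiableOn ℂ h U ∧
      (∃ z ∈ U, h z ≠ 0) ∧ (U ∩ P ⊆ {z | h z = 0}) ∧
      ∀ z ∈ U, h z ≠ 0 → f z = g z / h z

/-- `S` is an analytic subset of the open set `Ω`: locally the common zero set of
finitely many holomorphic functions. -/
def IsAnalyticIn [NormedAddCommGroup E] [NormedSpace ℂ E] (Ω S : Set E) : Prop :=
  S ⊆ Ω ∧ ∀ a ∈ Ω, ∃ U : Set E, IsOpen U ∧ a ∈ U ∧ U ⊆ Ω ∧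
    ∃ (k : ℕ) (g : Fin k → E → ℂ), (∀ i, DifferentiableOn ℂ (g i) U) ∧
      S ∩ U = {z ∈ U | ∀ i, g i z = 0}

/-! ### Two-fold crosses -/

variable {F : Type*}

/-- The 2-fold cross `𝕏(A,B;D,G) = (A×G) ∪ (D×B)`. -/
def Cross2 (A D : Set E) (B G : Set F) : Set (E × F) :=
  (A ×ˢ G) ∪ (D ×ˢ B)

/-- The envelope `X̂ = {(z,w) ∈ D×G : ω_{A,D}(z) + ω_{B,G}(w) < 1}`. -/
def Cross2Hat [NormedAddCommGroup E] [NormedSpace ℂ E]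
    [NormedAddCommGroup F] [NormedSpace ℂ F] (A D : Set E) (B G : Set F) :
    Set (E × F) :=
  {p | p.1 ∈ D ∧ p.2 ∈ G ∧ omegaFn A D p.1 + omegaFn B G p.2 < (1 : EReal)}

/-- `f` is separately meromorphic on the 2-fold cross `X = 𝕏(A,B;D,G)` off the
relatively closed set `S ⊆ X`. -/
def SepMeromorphic2 [NormedAddCommGroup E] [NormedSpace ℂ E]
    [NormedAddCommGroup F] [NormedSpace ℂ F]
    (A D : Set E) (B G : Set F) (S : Set (E × F)) (f : E × F → ℂ) : Prop :=
  (∀ a ∈ A, {w | (a, w) ∈ S} ≠ G →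
    ∃ (F₀ : F → ℂ) (P : Set F), MeromorphicWithPolarOn F₀ P G ∧
      ∀ w ∈ G, (a, w) ∉ S → w ∉ P → F₀ w = f (a, w)) ∧
  (∀ b ∈ B, {z | (z, b) ∈ S} ≠ D →
    ∃ (F₀ : E → ℂ) (P : Set E), MeromorphicWithPolarOn F₀ P D ∧
      ∀ z ∈ D, (z, b) ∉ S → z ∉ P → F₀ z = f (z, b))

/-! ### `N`-fold crosses -/

variable {N : ℕ} {n : Fin N → ℕ}

/-- A point of `ℂ^{n_1} × ⋯ × ℂ^{n_N}`. -/
abbrev CPt (n : Fin N → ℕ) := ∀ j : Fin N, Fin (n j) → ℂ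

/-- A point of the product of all factors except the `j`-th. -/
abbrev CRest (n : Fin N → ℕ) (j : Fin N) := ∀ i : {i : Fin N // i ≠ j}, Fin (n i.1) → ℂ

/-- Forget the `j`-th coordinate. -/
def restOf (j : Fin N) (z : CPt n) : CRest n j := fun i => z i.1

/-- The `N`-fold cross `𝕏(A_1,…,A_N; D_1,…,D_N)`. -/
def Cross (A D : ∀ j : Fin N, Set (Fin (n j) → ℂ)) : Set (CPt n) :=
  {z | ∃ j, z j ∈ D j ∧ ∀ i, i ≠ j → z i ∈ A i}

/-- The fiber `M_{(z',·,z'')}` of `M` in the `j`-th direction through `z`. -/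
def fiberSet (M : Set (CPt n)) (j : Fin N) (z : CPt n) : Set (Fin (n j) → ℂ) :=
  {w | Function.update z j w ∈ M}

/-- `Σ_j(M)`: the set of `(z',z'')` (with all coordinates in the `A_i`) whose fiber
`M_{(z',·,z'')}` is not pluripolar. -/
def SigmaSet (A : ∀ j : Fin N, Set (Fin (n j) → ℂ)) (M : Set (CPt n)) (j : Fin N) :
    Set (CRest n j) :=
  {y | (∀ i : {i : Fin N // i ≠ j}, y i ∈ A i.1) ∧
    ∃ z : CPt n, restOf j z = y ∧ ¬ Pluripolar (fiberSet M j z)}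

/-- The generalized `N`-fold cross `𝕋(A_1,…,A_N; D_1,…,D_N; S_1,…,S_N)`. -/
def GenCross (A D : ∀ j : Fin N, Set (Fin (n j) → ℂ)) (S : ∀ j : Fin N, Set (CRest n j)) :
    Set (CPt n) :=
  {z | ∃ j, z j ∈ D j ∧ (∀ i, i ≠ j → z i ∈ A i) ∧ restOf j z ∉ S j}

/-- The envelope `X̂` of the cross. -/
def CrossHat (A D : ∀ j : Fin N, Set (Fin (n j) → ℂ)) : Set (CPt n) :=
  {z | (∀ j, z j ∈ D j) ∧ ∑ j : Fin N, omegaFn (A j) (D j) (z j) < (1 : EReal)}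

/-- `f` is separately holomorphic on `T \ M`, where
`T = 𝕋(A_1,…,A_N; D_1,…,D_N; S_1,…,S_N)`. -/
def SepHolomorphicOn (A D : ∀ j : Fin N, Set (Fin (n j) → ℂ))
    (S : ∀ j : Fin N, Set (CRest n j)) (M : Set (CPt n)) (f : CPt n → ℂ) : Prop :=
  ∀ j : Fin N, ∀ z : CPt n, (∀ i, i ≠ j → z i ∈ A i) → restOf j z ∉ S j →
    DifferentiableOn ℂ (fun w => f (Function.update z j w)) (D j \ fiberSet M j z)

/-- `f` is separately meromorphic on `X \ M` (with an additional relatively closed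
singularity set `S ⊆ X \ M` off which `f` is defined): every slice through
admissible `(a',a'')` whose `(M∪S)`-fiber differs from `D_j` extends
meromorphically to `D_j` minus the `M`-fiber. -/
def SepMeromorphicOnCross (A D : ∀ j : Fin N, Set (Fin (n j) → ℂ))
    (M S : Set (CPt n)) (f : CPt n → ℂ) : Prop :=
  ∀ j : Fin N, ∀ z : CPt n, (∀ i, i ≠ j → z i ∈ A i) →
    fiberSet (M ∪ S) j z ≠ D j →
    ∃ (F : (Fin (n j) → ℂ) → ℂ) (P : Set (Fin (n j) → ℂ)),
      MeromorphicWithPolarOn F P (D j \ fiberSet M j z) ∧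
      ∀ w ∈ D j \ fiberSet (M ∪ S) j z, w ∉ P → F w = f (Function.update z j w)

/-- The conclusions of the main extension theorem (Theorem 1.1) for the pair
`(M, M̂)`: `M̂ ⊆ X̂` is relatively closed, pluripolar, `M̂ ∩ X' ⊆ M`, every
separately holomorphic function on `X ∖ M` has exactly one holomorphic extension to
`X̂ ∖ M̂` agreeing with it on `X' ∖ M`, and `M̂` is singular with respect to the
family of these extensions. -/
def MTProperties (A D : ∀ j : Fin N, Set (Fin (n j) → ℂ)) (M Mhat : Set (CPt n)) : Prop :=
  RelClosedIn Mhat (CrossHat A D) ∧ Pluripolar Mhat ∧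
  Mhat ∩ GenCross A D (SigmaSet A M) ⊆ M ∧
  (∀ f : CPt n → ℂ, SepHolomorphicOn A D (fun _ => ∅) M f →
    ∃ g : CPt n → ℂ,
      (DifferentiableOn ℂ g (CrossHat A D \ Mhat) ∧
        Set.EqOn g f (GenCross A D (SigmaSet A M) \ M)) ∧
      ∀ g' : CPt n → ℂ, DifferentiableOn ℂ g' (CrossHat A D \ Mhat) →
        Set.EqOn g' f (GenCross A D (SigmaSet A M) \ M) →
        Set.EqOn g' g (CrossHat A D \ Mhat)) ∧
  (∀ a ∈ Mhat, ∀ U : Set (CPt n), IsOpen U → a ∈ U →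
    ∃ f : CPt n → ℂ, SepHolomorphicOn A D (fun _ => ∅) M f ∧
      ∀ g : CPt n → ℂ, DifferentiableOn ℂ g (CrossHat A D \ Mhat) →
        Set.EqOn g f (GenCross A D (SigmaSet A M) \ M) →
        ¬ ∃ h : CPt n → ℂ, DifferentiableOn ℂ h U ∧
          Set.EqOn h g ((U ∩ CrossHat A D) \ Mhat))

end JP

/-!
The first coordinate of every point of `S` lies in the countable set `ℚ + iℚ`. Hence `S` has
empty interior, its horizontal slices are countable, and the vertical line through any point off
`ℚ + iℚ` misses `S`. In a polydisc, a point off `S` can thus be moved horizontally, inside a disc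
minus a countable set, to such a vertical line, so the polydisc minus `S` is path connected; this
local connectedness propagates to `U ∖ S` for every domain `U`. The discs shrink towards the
boundary point `1`, so only finitely many of them meet `{|w| < ρ}` for `ρ < 1`, which makes `S`
relatively closed. Yet the fiber of `S` over `q k` contains the `k`-th disc, so `A` is the
complement in `E` of the dense set `ℚ + iℚ`.
-/

open Metric

theorem Set.Countable.interior_eq_empty {X : Type*} [AddCommGroup X] [Module ℝ X]
    [Nontrivial X] [TopologicalSpace X] [ContinuousAdd X] [ContinuousSMul ℝ X]
    {C : Set X} (hC : C.Countable) : interior C = ∅ :=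
  interior_eq_empty_iff_dense_compl.2 (hC.dense_compl ℝ)

theorem interior_eq_empty_of_subset_prod_univ {X Y : Type*} [AddCommGroup X] [Module ℝ X]
    [Nontrivial X] [TopologicalSpace X] [ContinuousAdd X] [ContinuousSMul ℝ X]
    [TopologicalSpace Y] {C : Set X} (hC : C.Countable) {S : Set (X × Y)}
    (hS : S ⊆ C ×ˢ univ) : interior S = ∅ :=
  subset_empty_iff.1 <| (interior_mono hS).trans <| by
    rw [interior_prod_eq, hC.interior_eq_empty, empty_prod]

theorem Set.Countable.isPathConnected_ball_diff {E : Type*} [NormedAddCommGroup E]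
    [InnerProductSpace ℝ E] (h : 1 < Module.rank ℝ E) {C : Set E} (hC : C.Countable)
    (c : E) {r : ℝ} (hr : 0 < r) : IsPathConnected (ball c r \ C) := by
  set φ := OpenPartialHomeomorph.univBall c r
  have hinj : Function.Injective φ := by
    rw [← injOn_univ, ← OpenPartialHomeomorph.univBall_source c r]
    exact φ.injOn
  have hrange : range φ = ball c r := by
    rw [← image_univ, ← OpenPartialHomeomorph.univBall_source c r, φ.image_source_eq_target,
      OpenPartialHomeomorph.univBall_target c hr]
  rw [← hrange, ← image_compl_preimage]
  exact ((hC.preimage hinj).isPathConnected_compl_of_one_lt_rank h).image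
    (OpenPartialHomeomorph.continuous_univBall c r)

theorem isPathConnected_ball_diff_of_subset_prod_univ {X Y : Type*} [NormedAddCommGroup X]
    [InnerProductSpace ℝ X] [NormedAddCommGroup Y] [NormedSpace ℝ Y]
    (hX : 1 < Module.rank ℝ X) {C : Set X} (hC : C.Countable) {S : Set (X × Y)}
    (hS : S ⊆ C ×ˢ univ) (p : X × Y) {r : ℝ} (hr : 0 < r) :
    IsPathConnected (ball p r \ S) := by
  obtain ⟨z₀, hz₀, hz₀C⟩ := (hC.isPathConnected_ball_diff hX p.1 hr).nonempty
  have hz₀S : ∀ w, (z₀, w) ∉ S := fun w h => hz₀C (hS h).1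
  have hvert : (fun w => (z₀, w)) '' ball p.2 r ⊆ ball p r \ S := by
    rintro _ ⟨w, hw, rfl⟩
    exact ⟨by rw [← ball_prod_same]; exact ⟨hz₀, hw⟩, hz₀S w⟩
  have hhor : ∀ w ∈ ball p.2 r,
      (fun z => (z, w)) '' (ball p.1 r \ {z | (z, w) ∈ S}) ⊆ ball p r \ S := by
    rintro w hw _ ⟨z, ⟨hz, hzS⟩, rfl⟩
    exact ⟨by rw [← ball_prod_same]; exact ⟨hz, hw⟩, hzS⟩
  refine ⟨(z₀, p.2), hvert ⟨p.2, mem_ball_self hr, rfl⟩, ?_⟩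
  rintro ⟨z, w⟩ ⟨hzw, hzwS⟩
  rw [← ball_prod_same] at hzw
  have hvertJoin : JoinedIn (ball p r \ S) (z₀, p.2) (z₀, w) :=
    (((isPathConnected_ball hr).image (by fun_prop)).joinedIn _ ⟨p.2, mem_ball_self hr, rfl⟩
      _ ⟨w, hzw.2, rfl⟩).mono hvert
  have hslice : IsPathConnected (ball p.1 r \ {z | (z, w) ∈ S}) :=
    (hC.mono fun z (hz : (z, w) ∈ S) => (hS hz).1).isPathConnected_ball_diff hX p.1 hr
  have hhorJoin : JoinedIn (ball p r \ S) (z₀, w) (z, w) :=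
    ((hslice.image (by fun_prop)).joinedIn _ ⟨z₀, ⟨hz₀, hz₀S w⟩, rfl⟩
      _ ⟨z, ⟨hzw.1, hzwS⟩, rfl⟩).mono (hhor w hzw.2)
  exact hvertJoin.trans hhorJoin

theorem IsOpen.isPathConnected_diff_of_locally {X : Type*} [TopologicalSpace X]
    {U S : Set X} (hU : IsOpen U) (hUc : IsConnected U) (hS : interior S = ∅)
    (hloc : ∀ x ∈ U, ∃ V, IsOpen V ∧ x ∈ V ∧ V ⊆ U ∧ IsPathConnected (V \ S)) :
    IsPathConnected (U \ S) := by
  have hdense : Dense Sᶜ := interior_eq_empty_iff_dense_compl.1 hS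
  let P : X → X → Prop := fun x y =>
    ∀ᶠ a in 𝓝 x, ∀ᶠ b in 𝓝 y, a ∉ S → b ∉ S → JoinedIn (U \ S) a b
  have hlocal : ∀ x ∈ U, ∀ᶠ y in 𝓝[U] x, P x y ∧ P y x := by
    intro x hx
    obtain ⟨V, hVo, hxV, hVU, hV⟩ := hloc x hx
    have hjoin : ∀ a ∈ V, ∀ b ∈ V, a ∉ S → b ∉ S → JoinedIn (U \ S) a b :=
      fun a ha b hb haS hbS =>
        (hV.joinedIn a ⟨ha, haS⟩ b ⟨hb, hbS⟩).mono (sdiff_subset_sdiff_left hVU)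
    filter_upwards [nhdsWithin_le_nhds (hVo.mem_nhds hxV)] with y hy
    exact ⟨Filter.mem_of_superset (hVo.mem_nhds hxV) fun a ha =>
        Filter.mem_of_superset (hVo.mem_nhds hy) fun b hb => hjoin a ha b hb,
      Filter.mem_of_superset (hVo.mem_nhds hy) fun a ha =>
        Filter.mem_of_superset (hVo.mem_nhds hxV) fun b hb => hjoin a ha b hb⟩
  have htrans : ∀ x y z, x ∈ U → y ∈ U → z ∈ U → P x y → P y z → P x z := by
    intro x y z _ _ _ hxy hyz
    filter_upwards [hxy] with a ha
    obtain ⟨b, hbS, hab, hbc⟩ := hdense.inter_nhds_nonempty (ha.and hyz)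
    filter_upwards [hbc] with c hc haS hcS
    exact (hab haS hbS).trans (hc hbS hcS)
  refine isPathConnected_iff.2 ⟨hdense.inter_open_nonempty U hU hUc.nonempty, ?_⟩
  intro x hx y hy
  exact (hUc.isPreconnected.induction₂' P hlocal htrans hx.1 hy.1).self_of_nhds.self_of_nhds
    hx.2 hy.2

theorem IsOpen.isPathConnected_diff_of_subset_prod_univ {X Y : Type*} [NormedAddCommGroup X]
    [InnerProductSpace ℝ X] [NormedAddCommGroup Y] [NormedSpace ℝ Y]
    (hX : 1 < Module.rank ℝ X) {C : Set X} (hC : C.Countable) {S : Set (X × Y)}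
    (hS : S ⊆ C ×ˢ univ) {U : Set (X × Y)} (hU : IsOpen U) (hUc : IsConnected U) :
    IsPathConnected (U \ S) := by
  have : Nontrivial X := (rank_pos_iff_nontrivial (R := ℝ)).1 (zero_lt_one.trans hX)
  refine hU.isPathConnected_diff_of_locally hUc (interior_eq_empty_of_subset_prod_univ hC hS)
    fun x hx => ?_
  obtain ⟨r, hr, hxU⟩ := isOpen_iff.1 hU x hx
  exact ⟨ball x r, isOpen_ball, mem_ball_self hr, hxU,
    isPathConnected_ball_diff_of_subset_prod_univ hX hC hS x hr⟩

theorem closure_iUnion_inter_subset_of_finite {X ι : Type*} [TopologicalSpace X]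
    {K : ι → Set X} (hK : ∀ i, IsClosed (K i)) {V : Set X} (hV : IsOpen V)
    (hfin : {i | (K i ∩ V).Nonempty}.Finite) : closure (⋃ i, K i) ∩ V ⊆ ⋃ i, K i := by
  have hsub : V ∩ ⋃ i, K i ⊆ ⋃ i ∈ {i | (K i ∩ V).Nonempty}, K i := by
    rintro x ⟨hxV, hx⟩
    obtain ⟨i, hi⟩ := mem_iUnion.1 hx
    exact mem_biUnion ⟨x, hi, hxV⟩ hi
  rintro x ⟨hx, hxV⟩
  exact iUnion₂_subset (fun i _ => subset_iUnion K i) <|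
    closure_minimal hsub (hfin.isClosed_biUnion fun i _ => hK i) (hV.inter_closure ⟨hxV, hx⟩)

theorem dense_gaussianRationals :
    Dense {z : ℂ | ∃ r s : ℚ, z = (r : ℂ) + (s : ℂ) * Complex.I} := by
  have h : DenseRange fun p : ℚ × ℚ => Complex.equivRealProdCLM.symm ((p.1 : ℝ), (p.2 : ℝ)) :=
    Complex.equivRealProdCLM.symm.surjective.denseRange.comp
      (Rat.denseRange_cast.prodMap Rat.denseRange_cast) (by fun_prop)
  refine h.mono ?_
  rintro _ ⟨⟨r, s⟩, rfl⟩
  exact ⟨r, s, by simp [Complex.equivRealProdCLM_symm_apply]⟩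

def sakaiDisc (k : ℕ) : Set ℂ :=
  closedBall ((1 - ((k : ℝ) + 1)⁻¹ : ℝ) : ℂ) ((((k : ℝ) + 1) ^ 2)⁻¹)

def sakaiSet (q : ℕ → ℂ) : Set (ℂ × ℂ) :=
  ⋃ k : ℕ, {q k} ×ˢ sakaiDisc k

theorem one_sub_two_div_le_norm_of_mem_sakaiDisc {k : ℕ} {w : ℂ} (hw : w ∈ sakaiDisc k) :
    1 - 2 / ((k : ℝ) + 1) ≤ ‖w‖ := by
  set t : ℝ := ((k : ℝ) + 1)⁻¹ with ht
  have ht0 : 0 < t := by positivity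
  have ht1 : t ≤ 1 := inv_le_one_of_one_le₀ (by linarith [k.cast_nonneg (α := ℝ)])
  have hdist : dist w ((1 - t : ℝ) : ℂ) ≤ t * t := by
    simpa only [sakaiDisc, mem_closedBall, ← ht, inv_pow, sq, mul_inv] using hw
  have hcenter : ‖((1 - t : ℝ) : ℂ)‖ = 1 - t := by
    rw [Complex.norm_real, Real.norm_of_nonneg (by linarith)]
  have hreverse := norm_sub_norm_le ((1 - t : ℝ) : ℂ) w
  rw [← dist_eq_norm, dist_comm, hcenter] at hreverse
  rw [div_eq_mul_inv, ← ht]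
  nlinarith

theorem finite_setOf_sakaiDisc_inter_ball_nonempty {ρ : ℝ} (hρ : ρ < 1) :
    {k | (sakaiDisc k ∩ ball (0 : ℂ) ρ).Nonempty}.Finite := by
  obtain ⟨N, hN⟩ := exists_nat_ge (2 / (1 - ρ))
  refine (finite_lt_nat N).subset ?_
  rintro k ⟨w, hw, hwρ⟩
  have hk := one_sub_two_div_le_norm_of_mem_sakaiDisc hw
  rw [mem_ball_zero_iff] at hwρ
  have hk1 : (0 : ℝ) < (k : ℝ) + 1 := by positivity
  have : 1 - ρ < 2 / ((k : ℝ) + 1) := by linarith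
  rw [lt_div_iff₀ hk1, ← lt_div_iff₀' (by linarith)] at this
  exact_mod_cast (show (k : ℝ) < N by linarith)

theorem closure_sakaiSet_inter_subset (q : ℕ → ℂ) :
    closure (sakaiSet q) ∩ (univ ×ˢ ball (0 : ℂ) 1) ⊆ sakaiSet q := by
  rintro p ⟨hp, -, hp2⟩
  rw [mem_ball_zero_iff] at hp2
  refine closure_iUnion_inter_subset_of_finite
    (fun k => isClosed_singleton.prod isClosed_closedBall) (isOpen_univ.prod isOpen_ball)
    ((finite_setOf_sakaiDisc_inter_ball_nonempty (ρ := (1 + ‖p.2‖) / 2) (by linarith)).subset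
      ?_)
    ⟨hp, trivial, show p.2 ∈ ball (0 : ℂ) ((1 + ‖p.2‖) / 2) by
      rw [mem_ball_zero_iff]; linarith⟩
  rintro k ⟨x, hx, -, hxρ⟩
  exact ⟨x.2, hx.2, hxρ⟩

theorem sakaiSet_subset_range_prod_univ (q : ℕ → ℂ) : sakaiSet q ⊆ range q ×ˢ univ := by
  intro p hp
  obtain ⟨k, hk⟩ := mem_iUnion.1 hp
  exact ⟨⟨k, hk.1.symm⟩, trivial⟩

theorem interior_fiber_sakaiSet_eq_empty_iff {q : ℕ → ℂ} {a : ℂ} :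
    interior {w | (a, w) ∈ sakaiSet q} = ∅ ↔ a ∉ range q := by
  constructor
  · rintro h ⟨k, rfl⟩
    have hball : ball ((1 - ((k : ℝ) + 1)⁻¹ : ℝ) : ℂ) ((((k : ℝ) + 1) ^ 2)⁻¹) ⊆
        {w | (q k, w) ∈ sakaiSet q} :=
      fun w hw => mem_iUnion.2 ⟨k, rfl, ball_subset_closedBall hw⟩
    have := interior_maximal hball isOpen_ball
    rw [h] at this
    exact this (mem_ball_self (by positivity))
  · intro ha
    have hfiber : {w | (a, w) ∈ sakaiSet q} = ∅ :=
      eq_empty_of_forall_notMem fun w hw => ha (sakaiSet_subset_range_prod_univ q hw).1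
    rw [hfiber, interior_empty]

open JP in
theorem sakai_counterexample_general
    (q : ℕ → ℂ)
    (hrange : Set.range q =
      {z : ℂ | z ∈ Metric.ball (0 : ℂ) 1 ∧ ∃ r s : ℚ, z = (r : ℂ) + (s : ℂ) * Complex.I})
    (S : Set (ℂ × ℂ))
    (hS : S = ⋃ k : ℕ,
      {q k} ×ˢ Metric.closedBall ((1 - ((k : ℝ) + 1)⁻¹ : ℝ) : ℂ) ((((k : ℝ) + 1) ^ 2)⁻¹)) :
    -- (i) `S` is relatively closed in `E × E`
    closure S ∩ (Metric.ball (0 : ℂ) 1 ×ˢ Metric.ball (0 : ℂ) 1) ⊆ S ∧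
    -- (ii) `int S = ∅`
    interior S = ∅ ∧
    -- (iii) `S` does not separate domains
    (∀ U : Set (ℂ × ℂ), U ⊆ Metric.ball (0 : ℂ) 1 ×ˢ Metric.ball (0 : ℂ) 1 →
      IsOpen U → IsConnected U → IsConnected (U \ S)) ∧
    -- (iv) `A = E ∖ (ℚ + iℚ)`, which has empty interior
    {a ∈ Metric.ball (0 : ℂ) 1 | interior {w : ℂ | (a, w) ∈ S} = ∅} =
      Metric.ball (0 : ℂ) 1 \ {z : ℂ | ∃ r s : ℚ, z = (r : ℂ) + (s : ℂ) * Complex.I} ∧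
    interior {a ∈ Metric.ball (0 : ℂ) 1 | interior {w : ℂ | (a, w) ∈ S} = ∅} = ∅ ∧
    -- `B = E`
    {b ∈ Metric.ball (0 : ℂ) 1 | interior {z : ℂ | (z, b) ∈ S} = ∅} =
      Metric.ball (0 : ℂ) 1 ∧
    -- in particular, some domain `U ⊆ E × E` is such that `(A × B) ∩ U ∖ S`
    -- contains no open polydisc
    ∃ U : Set (ℂ × ℂ), IsOpen U ∧ IsConnected U ∧
      U ⊆ Metric.ball (0 : ℂ) 1 ×ˢ Metric.ball (0 : ℂ) 1 ∧
      ∀ (c₁ c₂ : ℂ) (r : ℝ), 0 < r →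
        ¬ (Metric.ball c₁ r ×ˢ Metric.ball c₂ r ⊆
          (({a ∈ Metric.ball (0 : ℂ) 1 | interior {w : ℂ | (a, w) ∈ S} = ∅} ×ˢ
            {b ∈ Metric.ball (0 : ℂ) 1 | interior {z : ℂ | (z, b) ∈ S} = ∅}) ∩ U) \ S) := by
  obtain rfl : S = sakaiSet q := hS
  have hfst := sakaiSet_subset_range_prod_univ q
  have hint := interior_eq_empty_of_subset_prod_univ (countable_range q) hfst
  have hA : {a ∈ ball (0 : ℂ) 1 | interior {w | (a, w) ∈ sakaiSet q} = ∅} =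
      ball (0 : ℂ) 1 \ {z : ℂ | ∃ r s : ℚ, z = (r : ℂ) + (s : ℂ) * Complex.I} := by
    ext a
    simp only [mem_ofPred_eq, Set.mem_sdiff, interior_fiber_sakaiSet_eq_empty_iff, hrange,
      not_and]
    exact and_congr_right fun ha => ⟨fun h => h ha, fun h _ => h⟩
  have hAint : interior {a ∈ ball (0 : ℂ) 1 | interior {w | (a, w) ∈ sakaiSet q} = ∅} = ∅ :=
    hA ▸ interior_eq_empty_iff_dense_compl.2 (dense_gaussianRationals.mono fun _ hz h => h.2 hz)
  refine ⟨fun p hp => closure_sakaiSet_inter_subset q ⟨hp.1, trivial, hp.2.2⟩, hint,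
    fun U _ hU hUc => ?_, hA, hAint, ?_, ball (0 : ℂ) 1 ×ˢ ball (0 : ℂ) 1,
    isOpen_ball.prod isOpen_ball, ?_, subset_rfl, ?_⟩
  · exact (hU.isPathConnected_diff_of_subset_prod_univ (by simp [Complex.rank_real_complex])
      (countable_range q) hfst hUc).isConnected
  · ext b
    simp only [mem_ofPred_eq, and_iff_left_iff_imp]
    exact fun _ => ((countable_range q).mono
      fun z (hz : (z, b) ∈ sakaiSet q) => (hfst hz).1).interior_eq_empty
  · exact (isConnected_ball one_pos).prod (isConnected_ball one_pos)
  · intro c₁ c₂ r hr hsub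
    have hball : ball c₁ r ⊆ {a ∈ ball (0 : ℂ) 1 | interior {w | (a, w) ∈ sakaiSet q} = ∅} :=
      fun z hz => (hsub (mk_mem_prod hz (mem_ball_self hr))).1.1.1
    simpa only [hAint, mem_empty_iff_false] using interior_maximal hball isOpen_ball (mem_ball_self hr)

open JP in
/-- **Remark 3.2** (counterexample to Sakai's argument): for an enumeration
`(q_k)` of the Gaussian rationals in the unit disc `E`, the set
`S = ⋃_k {q_k} × closedDisc(1 - 1/k, 1/k²)` is relatively closed in `E × E`, has
empty interior, does not separate domains, and yet the set `A` of `a ∈ E` whose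
fiber `S_{(a,·)}` has empty interior equals `E ∖ (ℚ + iℚ)`, which has empty
interior; in particular no set `(A×B) ∩ U ∖ S` contains an open polydisc. -/
theorem sakai_counterexample
    (q : ℕ → ℂ) (hinj : Function.Injective q)
    (hrange : Set.range q =
      {z : ℂ | z ∈ Metric.ball (0 : ℂ) 1 ∧ ∃ r s : ℚ, z = (r : ℂ) + (s : ℂ) * Complex.I})
    (S : Set (ℂ × ℂ))
    (hS : S = ⋃ k : ℕ,
      {q k} ×ˢ Metric.closedBall ((1 - ((k : ℝ) + 1)⁻¹ : ℝ) : ℂ) ((((k : ℝ) + 1) ^ 2)⁻¹)) :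
    -- (i) `S` is relatively closed in `E × E`
    closure S ∩ (Metric.ball (0 : ℂ) 1 ×ˢ Metric.ball (0 : ℂ) 1) ⊆ S ∧
    -- (ii) `int S = ∅`
    interior S = ∅ ∧
    -- (iii) `S` does not separate domains
    (∀ U : Set (ℂ × ℂ), U ⊆ Metric.ball (0 : ℂ) 1 ×ˢ Metric.ball (0 : ℂ) 1 →
      IsOpen U → IsConnected U → IsConnected (U \ S)) ∧
    -- (iv) `A = E ∖ (ℚ + iℚ)`, which has empty interior
    {a ∈ Metric.ball (0 : ℂ) 1 | interior {w : ℂ | (a, w) ∈ S} = ∅} =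
      Metric.ball (0 : ℂ) 1 \ {z : ℂ | ∃ r s : ℚ, z = (r : ℂ) + (s : ℂ) * Complex.I} ∧
    interior {a ∈ Metric.ball (0 : ℂ) 1 | interior {w : ℂ | (a, w) ∈ S} = ∅} = ∅ ∧
    -- `B = E`
    {b ∈ Metric.ball (0 : ℂ) 1 | interior {z : ℂ | (z, b) ∈ S} = ∅} =
      Metric.ball (0 : ℂ) 1 ∧
    -- in particular, some domain `U ⊆ E × E` is such that `(A × B) ∩ U ∖ S`
    -- contains no open polydisc
    ∃ U : Set (ℂ × ℂ), IsOpen U ∧ IsConnected U ∧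
      U ⊆ Metric.ball (0 : ℂ) 1 ×ˢ Metric.ball (0 : ℂ) 1 ∧
      ∀ (c₁ c₂ : ℂ) (r : ℝ), 0 < r →
        ¬ (Metric.ball c₁ r ×ˢ Metric.ball c₂ r ⊆
          (({a ∈ Metric.ball (0 : ℂ) 1 | interior {w : ℂ | (a, w) ∈ S} = ∅} ×ˢ
            {b ∈ Metric.ball (0 : ℂ) 1 | interior {z : ℂ | (z, b) ∈ S} = ∅}) ∩ U) \ S) :=
  sakai_counterexample_general q hrange S hS
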